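/- arXiv:2602.08074 — 4 statements merged into one kernel-verified Lean document; each statement's English description precedes it below -/
import Mathlib

section
/- Let Σ be a nonempty type, U : Σ → ℝ with |U σ| ≤ B for all σ, and L : Σ → ℝ bounded below. Let M : ℕ → ℝ tend to +∞ and for each k let σ_k maximize the penalized evaluation σ ↦ U σ − M k · L σ over Σ. Then L(σ_k) converges to the infimum ⨅_{σ∈Σ} L σ as k → ∞. -/
/-- As penalties diverge, the continuation loss of penalized maximizers
converges to the infimum of the continuation loss. -/
theorem penalized_maximizers_loss_tendsto_iInf {S : Type*} [Nonempty S]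
    (U : S → ℝ) (L : S → ℝ) (B : ℝ) (hU : ∀ σ, |U σ| ≤ B)
    (hLbdd : BddBelow (Set.range L))
    (M : ℕ → ℝ) (hM : Filter.Tendsto M Filter.atTop Filter.atTop)
    (σseq : ℕ → S)
    (hmax : ∀ k σ, U (σseq k) - M k * L (σseq k) ≥ U σ - M k * L σ) :
    Filter.Tendsto (fun k => L (σseq k)) Filter.atTop (nhds (⨅ σ, L σ)) := by
  set c : ℝ := ⨅ σ, L σ with hc
  have hlow : ∀ k, c ≤ L (σseq k) := fun k => ciInf_le hLbdd _
  -- upper bound eventually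
  have hupper : ∀ᶠ k in Filter.atTop, L (σseq k) ≤ c + 2 * B / M k := by
    filter_upwards [hM.eventually_gt_atTop 0] with k hMk
    have key : ∀ σ : S, L (σseq k) - 2 * B / M k ≤ L σ := by
      intro σ
      have h1 := hmax k σ
      have h2 : M k * (L (σseq k) - L σ) ≤ U (σseq k) - U σ := by nlinarith
      have h3 : U (σseq k) - U σ ≤ 2 * B := by
        have := abs_le.1 (hU (σseq k)); have := abs_le.1 (hU σ); linarith
      have h4 : L (σseq k) - L σ ≤ 2 * B / M k := by
        rw [le_div_iff₀ hMk]; nlinarith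
      linarith
    have : L (σseq k) - 2 * B / M k ≤ c := le_ciInf key
    linarith
  have hdiv : Filter.Tendsto (fun k => c + 2 * B / M k) Filter.atTop (nhds (c + 0)) :=
    Filter.Tendsto.const_add c (Filter.Tendsto.div_atTop tendsto_const_nhds hM)
  rw [add_zero] at hdiv
  exact tendsto_of_tendsto_of_tendsto_of_le_of_le' tendsto_const_nhds hdiv
    (Filter.Eventually.of_forall hlow) hupper
end

section
/- (Penalty-limit equivalence, continuation part for Nash limits.) Let ι be a type of players, let each S i be a topological space, and let Σ := Π i, S i carry the product topology. Let L : Σ → ℝ be continuous, let U : ι → Σ → ℝ satisfy |U i σ| ≤ B for all i, σ, let M : ℕ → ℝ tend to +∞, and let σ_k ∈ Σ be, for each k, a Nash equilibrium of the penalized game: for every player i and every deviation s ∈ S i, U i (σ_k) − M k · L(σ_k) ≥ U i (update σ_k i s) − M k · L(update σ_k i s), where update σ i s replaces the i-th coordinate of σ by s. If σ_k converges to σ* in Σ, then σ* satisfies continuation priority at equilibrium: for every player i and every deviation s ∈ S i, L(update σ* i s) ≥ L(σ*). -/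
/-- Penalty-limit equivalence, continuation part: a limit of Nash equilibria of
penalized games (with diverging penalties) satisfies continuation priority:
no unilateral deviation strictly reduces the continuation loss. -/
theorem nash_limit_continuation_priority {ι : Type*} {S : ι → Type*}
    [∀ i, TopologicalSpace (S i)] [DecidableEq ι]
    (L : (∀ i, S i) → ℝ) (hL : Continuous L)
    (U : ι → (∀ i, S i) → ℝ) (B : ℝ) (hU : ∀ i σ, |U i σ| ≤ B)
    (M : ℕ → ℝ) (hM : Filter.Tendsto M Filter.atTop Filter.atTop)
    (σseq : ℕ → ∀ i, S i)
    (hnash : ∀ k (i : ι) (s : S i),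
      U i (σseq k) - M k * L (σseq k) ≥
        U i (Function.update (σseq k) i s) - M k * L (Function.update (σseq k) i s))
    (σstar : ∀ i, S i)
    (hconv : Filter.Tendsto σseq Filter.atTop (nhds σstar)) :
    ∀ (i : ι) (s : S i), L (Function.update σstar i s) ≥ L σstar := by
  intro i s
  -- continuity of the update map
  have hupd : Continuous fun σ : ∀ j, S j => Function.update σ i s := by
    apply continuous_pi
    intro j
    by_cases hj : j = i
    · subst hj
      simp only [Function.update_self]
      exact continuous_const
    · simp only [Function.update_of_ne hj]
      exact continuous_apply j
  have htend1 : Filter.Tendsto (fun k => L (Function.update (σseq k) i s))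
      Filter.atTop (nhds (L (Function.update σstar i s))) :=
    (hL.comp hupd).continuousAt.tendsto.comp hconv
  have htend2 : Filter.Tendsto (fun k => L (σseq k)) Filter.atTop (nhds (L σstar)) :=
    hL.continuousAt.tendsto.comp hconv
  have htendf : Filter.Tendsto
      (fun k => L (Function.update (σseq k) i s) - L (σseq k))
      Filter.atTop (nhds (L (Function.update σstar i s) - L σstar)) :=
    htend1.sub htend2
  have htendg : Filter.Tendsto (fun k => -(2 * B) / M k) Filter.atTop (nhds 0) :=
    Filter.Tendsto.div_atTop tendsto_const_nhds hM
  have hev : ∀ᶠ k in Filter.atTop,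
      -(2 * B) / M k ≤ L (Function.update (σseq k) i s) - L (σseq k) := by
    filter_upwards [hM.eventually_gt_atTop 0] with k hk
    have h := hnash k i s
    have h1 : M k * (L (Function.update (σseq k) i s) - L (σseq k)) ≥
        U i (Function.update (σseq k) i s) - U i (σseq k) := by ring_nf; linarith
    have h2 : U i (Function.update (σseq k) i s) - U i (σseq k) ≥ -(2 * B) := by
      have a := abs_le.mp (hU i (Function.update (σseq k) i s))
      have b := abs_le.mp (hU i (σseq k))
      linarith [a.1, a.2, b.1, b.2]
    rw [div_le_iff₀ hk] at *
    nlinarith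
  have := le_of_tendsto_of_tendsto htendg htendf hev
  simpa using this
end

section
/- (Decoupling theorem, order-theoretic core.) Let Z be a nonempty linear order, Y a type, and ≾ a total preorder on Z × Y (reflexive, transitive, and any two elements comparable). Assume: (D1, tail priority) for all z z' y y', if z < z' then (z,y) ≺ (z',y'), i.e. (z,y) ≾ (z',y') and not (z',y') ≾ (z,y); and (D2, no leakage) for all z z' y y', (z,y) ≾ (z,y') if and only if (z',y) ≾ (z',y'). Then there exists a total preorder ⊑ on Y such that for all z z' y y', (z,y) ≾ (z',y') if and only if z < z' or (z = z' and y ⊑ y'); that is, ≾ decomposes lexicographically into the tail order on Z followed by an induced performance order on Y. -/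
/-- Decoupling theorem, order-theoretic core: a total preorder on `Z × Y`
satisfying tail priority and no leakage decomposes lexicographically into the
tail order on `Z` followed by an induced total preorder on `Y`. -/
theorem decoupling_theorem {Z Y : Type*} [LinearOrder Z] [Nonempty Z]
    (le : Z × Y → Z × Y → Prop)
    (hrefl : ∀ a, le a a)
    (htrans : ∀ a b c, le a b → le b c → le a c)
    (htotal : ∀ a b, le a b ∨ le b a)
    (htail : ∀ (z z' : Z) (y y' : Y), z < z' →
      le (z, y) (z', y') ∧ ¬ le (z', y') (z, y))
    (hnoleak : ∀ (z z' : Z) (y y' : Y),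
      (le (z, y) (z, y') ↔ le (z', y) (z', y'))) :
    ∃ r : Y → Y → Prop, Reflexive r ∧ Transitive r ∧ (∀ y y', r y y' ∨ r y' y) ∧
      ∀ (z z' : Z) (y y' : Y),
        le (z, y) (z', y') ↔ (z < z' ∨ (z = z' ∧ r y y')) := by
  obtain ⟨z0⟩ := ‹Nonempty Z›
  refine ⟨fun y y' => le (z0, y) (z0, y'), fun y => hrefl _,
    fun a b c hab hbc => htrans _ _ _ hab hbc,
    fun y y' => htotal _ _, fun z z' y y' => ?_⟩
  constructor
  · intro h
    rcases lt_trichotomy z z' with hlt | heq | hgt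
    · exact Or.inl hlt
    · subst heq
      exact Or.inr ⟨rfl, (hnoleak z z0 y y').mp h⟩
    · exact absurd h (htail z' z y' y hgt).2
  · rintro (hlt | ⟨rfl, hr⟩)
    · exact (htail z z' y y' hlt).1
    · exact (hnoleak z0 z y y').mp hr
end

section
/- (Penalty-limit equivalence, ranking form.) Let Σ be a type, U : Σ → ℝ with |U σ| ≤ B for all σ, and L : Σ → ℝ. Then for all σ, σ' ∈ Σ: [L σ' < L σ, or (L σ' = L σ and U σ' > U σ)] if and only if there exists M₀ such that for all M ≥ M₀, U σ' − M·L σ' > U σ − M·L σ. That is, the lexicographic CPD ranking (continuation loss first, performance second) is exactly the eventual ranking induced by penalized evaluations as the failure penalty diverges. -/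
/-- Penalty-limit equivalence, ranking form: the lexicographic CPD ranking
(continuation loss first, performance second) is exactly the eventual ranking
induced by penalized evaluations `U - M·L` as the penalty `M` diverges. -/
theorem cpd_ranking_iff_eventual_penalized_ranking {S : Type*}
    (U : S → ℝ) (L : S → ℝ) (B : ℝ) (hU : ∀ σ, |U σ| ≤ B) (σ σ' : S) :
    (L σ' < L σ ∨ (L σ' = L σ ∧ U σ' > U σ)) ↔
      ∃ M₀ : ℝ, ∀ M ≥ M₀, U σ' - M * L σ' > U σ - M * L σ := by
  constructor
  · rintro (h | ⟨hL, hUlt⟩)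
    · refine ⟨(U σ - U σ' + 1) / (L σ - L σ'), fun M hM => ?_⟩
      have hpos : 0 < L σ - L σ' := by linarith
      have := (div_le_iff₀ hpos).mp hM
      nlinarith
    · exact ⟨0, fun M _ => by rw [hL]; linarith⟩
  · rintro ⟨M₀, hM⟩
    rcases lt_trichotomy (L σ') (L σ) with h | h | h
    · exact Or.inl h
    · exact Or.inr ⟨h, by have := hM M₀ le_rfl; rw [h] at this; linarith⟩
    · exfalso
      have hpos : 0 < L σ' - L σ := by linarith
      set M := max M₀ ((U σ' - U σ + 1) / (L σ' - L σ)) with hMdef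
      have h1 := hM M (le_max_left _ _)
      have h2 : (U σ' - U σ + 1) / (L σ' - L σ) ≤ M := le_max_right _ _
      have := (div_le_iff₀ hpos).mp h2
      nlinarith
end
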